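/- arXiv:1604.04002 — 2 statements merged into one kernel-verified Lean document; each statement's English description precedes it below -/
import Mathlib

section
/- Let A, Â ∈ ℝ^{d×d} with |Â − A|_∞ ≤ u♯ for some u♯ > 0, let S = supp(A) be nonempty, and let Ŝ = {(m,k) : |Â_{mk}| > u♯}. Suppose moreover that the weak-signal condition |{(m,k) : 0 < |A_{mk}| ≤ 2u♯}| ≤ |S| · L · (2u♯)^β holds for some L, β > 0. Then the false negative rate satisfies FNR = |Ŝᶜ ∩ S| / |S| ≤ 2^β L u♯^β. -/
/-! A support entry that the threshold misses has `|Â_{mk}| ≤ u♯`, so by the entrywise error bound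
`|A_{mk}| ≤ 2u♯`: every false negative is a weak signal. The weak-signal condition then bounds
the number of false negatives by `|S| · L · (2u♯)^β`, and `(2u♯)^β = 2^β u♯^β`. -/

open Finset

theorem abs_le_two_mul_of_abs_sub_le_of_abs_le {x y u : ℝ} (hxy : |y - x| ≤ u) (hy : |y| ≤ u) :
    |x| ≤ 2 * u := by
  have := abs_sub_abs_le_abs_sub x y
  rw [abs_sub_comm] at this
  linarith

theorem compl_filter_lt_abs_inter_support_subset {ι : Type*} [Fintype ι] [DecidableEq ι]
    {a ahat : ι → ℝ} {u : ℝ} (hclose : ∀ i, |ahat i - a i| ≤ u) :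
    (univ.filter fun i => u < |ahat i|)ᶜ ∩ univ.filter (fun i => a i ≠ 0) ⊆
      univ.filter fun i => 0 < |a i| ∧ |a i| ≤ 2 * u := by
  intro i hi
  simp only [mem_inter, mem_compl, mem_filter, mem_univ, true_and, not_lt] at hi ⊢
  exact ⟨abs_pos.mpr hi.2, abs_le_two_mul_of_abs_sub_le_of_abs_le (hclose i) hi.1⟩

theorem stmt8_general {d : ℕ} (A Ahat : Matrix (Fin d) (Fin d) ℝ) (usharp L β : ℝ)
    (hu : 0 < usharp)
    (hclose : ∀ m k, |Ahat m k - A m k| ≤ usharp)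
    (S : Finset (Fin d × Fin d))
    (hS : S = Finset.univ.filter (fun p : Fin d × Fin d => A p.1 p.2 ≠ 0))
    (hSne : S.Nonempty)
    (Shat : Finset (Fin d × Fin d))
    (hShat : Shat = Finset.univ.filter (fun p : Fin d × Fin d => usharp < |Ahat p.1 p.2|))
    (hweak : ((Finset.univ.filter (fun p : Fin d × Fin d =>
        0 < |A p.1 p.2| ∧ |A p.1 p.2| ≤ 2 * usharp)).card : ℝ)
        ≤ (S.card : ℝ) * L * (2 * usharp) ^ β) :
    ((Shatᶜ ∩ S).card : ℝ) / (S.card : ℝ) ≤ 2 ^ β * L * usharp ^ β := by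
  have hmissed : (Shatᶜ ∩ S).card ≤ (univ.filter fun p : Fin d × Fin d =>
      0 < |A p.1 p.2| ∧ |A p.1 p.2| ≤ 2 * usharp).card := by
    subst hS hShat
    exact card_le_card <|
      compl_filter_lt_abs_inter_support_subset fun p : Fin d × Fin d => hclose p.1 p.2
  rw [div_le_iff₀ (by exact_mod_cast hSne.card_pos)]
  calc ((Shatᶜ ∩ S).card : ℝ) ≤ S.card * L * (2 * usharp) ^ β :=
        (Nat.cast_le.mpr hmissed).trans hweak
    _ = 2 ^ β * L * usharp ^ β * S.card := by
        rw [Real.mul_rpow zero_le_two hu.le]; ring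

open Finset Real in
/-- FNR bound under the weak-signal condition: if |Â − A|_∞ ≤ u♯, S = supp(A) ≠ ∅,
Ŝ = {(m,k) : |Â_{mk}| > u♯}, and the number of nonzero entries of A with magnitude at most
2u♯ is at most |S|·L·(2u♯)^β, then |Ŝᶜ ∩ S| / |S| ≤ 2^β · L · u♯^β. -/
theorem stmt8 {d : ℕ} (A Ahat : Matrix (Fin d) (Fin d) ℝ) (usharp L β : ℝ)
    (hu : 0 < usharp) (hL : 0 < L) (hβ : 0 < β)
    (hclose : ∀ m k, |Ahat m k - A m k| ≤ usharp)
    (S : Finset (Fin d × Fin d))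
    (hS : S = Finset.univ.filter (fun p : Fin d × Fin d => A p.1 p.2 ≠ 0))
    (hSne : S.Nonempty)
    (Shat : Finset (Fin d × Fin d))
    (hShat : Shat = Finset.univ.filter (fun p : Fin d × Fin d => usharp < |Ahat p.1 p.2|))
    (hweak : ((Finset.univ.filter (fun p : Fin d × Fin d =>
        0 < |A p.1 p.2| ∧ |A p.1 p.2| ≤ 2 * usharp)).card : ℝ)
        ≤ (S.card : ℝ) * L * (2 * usharp) ^ β) :
    ((Shatᶜ ∩ S).card : ℝ) / (S.card : ℝ) ≤ 2 ^ β * L * usharp ^ β :=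
  stmt8_general A Ahat usharp L β hu hclose S hS hSne Shat hShat hweak
end

section
/- Let A ∈ ℝ^{d×d} satisfy max_j ∑_m |A_{jm}|^α ≤ s for some 0 ≤ α < 1 and s > 0, and let Â ∈ ℝ^{d×d} satisfy |Â − A|_∞ ≤ δ and row-wise ℓ¹ domination |Â_{j·}|₁ ≤ |A_{j·}|₁ for all j. Then with u = 2δ, every row satisfies ∑_m |Â_{jm} − A_{jm}| ≤ 4 s (2δ)^{1−α}. -/
/-!
Split each row at the threshold `u = 2δ`. The entries with `|A_{jm}| > u` carry weight at least
`u^α` each, so there are at most `s u^{-α}` of them, and on them the error is at most `δ`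
entrywise. The remaining entries have total mass `∑ |A_{jm}| ≤ u^{1-α} ∑ |A_{jm}|^α ≤ s u^{1-α}`.
The row-wise ℓ¹ domination `|Â_{j·}|₁ ≤ |A_{j·}|₁` transfers the error from the small entries
back onto the large ones, which gives `3 s u^{1-α}`.
-/

open Finset

/-- `|x|^α`, with the convention `0^α = 0` also for `α = 0`. -/
noncomputable def sparsityWeight (α x : ℝ) : ℝ := if x = 0 then 0 else |x| ^ α

lemma sparsityWeight_nonneg (α x : ℝ) : 0 ≤ sparsityWeight α x := by
  unfold sparsityWeight
  split_ifs
  exacts [le_rfl, by positivity]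

lemma rpow_le_sparsityWeight {α u x : ℝ} (hα : 0 ≤ α) (hu : 0 ≤ u) (hx : u < |x|) :
    u ^ α ≤ sparsityWeight α x := by
  have hx0 : x ≠ 0 := by rintro rfl; simp at hx; linarith
  rw [sparsityWeight, if_neg hx0]
  exact Real.rpow_le_rpow hu hx.le hα

lemma abs_le_rpow_mul_sparsityWeight {α u x : ℝ} (hα : α ≤ 1) (hx : |x| ≤ u) :
    |x| ≤ u ^ (1 - α) * sparsityWeight α x := by
  rcases eq_or_ne x 0 with rfl | hx0
  · simp [sparsityWeight]
  have hpos : 0 < |x| := abs_pos.mpr hx0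
  rw [sparsityWeight, if_neg hx0]
  calc |x| = |x| ^ (1 - α) * |x| ^ α := by rw [← Real.rpow_add hpos]; simp
    _ ≤ u ^ (1 - α) * |x| ^ α := by gcongr

section WeakSparsity

variable {ι : Type*} [Fintype ι] {a : ι → ℝ} {α s u : ℝ}

lemma card_mul_le_of_sum_sparsityWeight_le (hα0 : 0 ≤ α) (hu : 0 < u)
    (hs : ∑ m, sparsityWeight α (a m) ≤ s) :
    #{m | u < |a m|} * u ≤ s * u ^ (1 - α) := by
  have hcard : #{m | u < |a m|} * u ^ α ≤ s :=
    calc #{m | u < |a m|} * u ^ α = ∑ m ∈ {m | u < |a m|}, u ^ α := by simp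
      _ ≤ ∑ m ∈ {m | u < |a m|}, sparsityWeight α (a m) :=
        sum_le_sum fun m hm => rpow_le_sparsityWeight hα0 hu.le (mem_filter.mp hm).2
      _ ≤ ∑ m, sparsityWeight α (a m) :=
        sum_le_sum_of_subset_of_nonneg (subset_univ _) fun m _ _ => sparsityWeight_nonneg α _
      _ ≤ s := hs
  calc #{m | u < |a m|} * u = #{m | u < |a m|} * u ^ α * u ^ (1 - α) := by
        rw [mul_assoc, ← Real.rpow_add hu]; simp
    _ ≤ s * u ^ (1 - α) := by gcongr

lemma sum_abs_le_of_sum_sparsityWeight_le (hα1 : α ≤ 1) (hu : 0 ≤ u)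
    (hs : ∑ m, sparsityWeight α (a m) ≤ s) :
    ∑ m ∈ {m | |a m| ≤ u}, |a m| ≤ s * u ^ (1 - α) :=
  calc ∑ m ∈ {m | |a m| ≤ u}, |a m|
      ≤ ∑ m ∈ {m | |a m| ≤ u}, u ^ (1 - α) * sparsityWeight α (a m) :=
        sum_le_sum fun m hm => abs_le_rpow_mul_sparsityWeight hα1 (mem_filter.mp hm).2
    _ ≤ ∑ m, u ^ (1 - α) * sparsityWeight α (a m) :=
        sum_le_sum_of_subset_of_nonneg (subset_univ _) fun m _ _ =>
          mul_nonneg (by positivity) (sparsityWeight_nonneg α _)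
    _ ≤ s * u ^ (1 - α) := by
        rw [← mul_sum, mul_comm]; gcongr

end WeakSparsity

/-- The cone inequality of ℓ¹-constrained estimation. -/
lemma sum_norm_sub_le_of_sum_norm_le {ι E : Type*} [Fintype ι] [SeminormedAddCommGroup E]
    {a b : ι → E} (hab : ∑ m, ‖b m‖ ≤ ∑ m, ‖a m‖) (p : ι → Prop) [DecidablePred p] :
    ∑ m, ‖b m - a m‖ ≤ 2 * ∑ m with p m, ‖b m - a m‖ + 2 * ∑ m with ¬p m, ‖a m‖ := by
  have hoff : ∑ m with ¬p m, ‖b m - a m‖ ≤ ∑ m with ¬p m, ‖b m‖ + ∑ m with ¬p m, ‖a m‖ := by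
    rw [← sum_add_distrib]; exact sum_le_sum fun m _ => norm_sub_le _ _
  have hon : ∑ m with p m, ‖a m‖ ≤ ∑ m with p m, ‖b m‖ + ∑ m with p m, ‖b m - a m‖ := by
    rw [← sum_add_distrib]; exact sum_le_sum fun m _ => norm_le_norm_add_norm_sub _ _
  have := sum_filter_add_sum_filter_not univ p fun m => ‖b m - a m‖
  have := sum_filter_add_sum_filter_not univ p fun m => ‖b m‖
  have := sum_filter_add_sum_filter_not univ p fun m => ‖a m‖
  linarith

lemma sum_abs_sub_le_of_sparsityWeight {ι : Type*} [Fintype ι] {a b : ι → ℝ}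
    {α s δ : ℝ} (hα0 : 0 ≤ α) (hα1 : α ≤ 1) (hδ : 0 < δ)
    (hs : ∑ m, sparsityWeight α (a m) ≤ s) (hclose : ∀ m, |b m - a m| ≤ δ)
    (hab : ∑ m, |b m| ≤ ∑ m, |a m|) :
    ∑ m, |b m - a m| ≤ 3 * s * (2 * δ) ^ (1 - α) := by
  have hbasic := sum_norm_sub_le_of_sum_norm_le (a := a) (b := b) (by simpa using hab)
    fun m => 2 * δ < |a m|
  simp only [Real.norm_eq_abs, not_lt] at hbasic
  have hon : ∑ m with 2 * δ < |a m|, |b m - a m| ≤ #{m | 2 * δ < |a m|} * δ := by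
    simpa using sum_le_sum fun m (_ : m ∈ ({m | 2 * δ < |a m|} : Finset ι)) => hclose m
  have hcard := card_mul_le_of_sum_sparsityWeight_le (u := 2 * δ) hα0 (by positivity) hs
  have hoff := sum_abs_le_of_sum_sparsityWeight_le (u := 2 * δ) hα1 (by positivity) hs
  linarith

open Real in
theorem stmt16_general {d : ℕ} (A Ahat : Matrix (Fin d) (Fin d) ℝ) (s α δ : ℝ)
    (hα0 : 0 ≤ α) (hα1 : α < 1) (hδ : 0 < δ)
    (hsparse : ∀ j, ∑ m, (if A j m = 0 then (0 : ℝ) else |A j m| ^ α) ≤ s)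
    (hclose : ∀ j m, |Ahat j m - A j m| ≤ δ)
    (hl1 : ∀ j, ∑ m, |Ahat j m| ≤ ∑ m, |A j m|) :
    ∀ j, ∑ m, |Ahat j m - A j m| ≤ 4 * s * (2 * δ) ^ (1 - α) := by
  intro j
  have hrow := sum_abs_sub_le_of_sparsityWeight hα0 hα1.le hδ (hsparse j) (hclose j) (hl1 j)
  have hs : 0 ≤ s := (sum_nonneg fun m _ => sparsityWeight_nonneg α (A j m)).trans (hsparse j)
  have : 0 ≤ s * (2 * δ) ^ (1 - α) := by positivity
  linarith

open Real in
/-- Row-wise ℓ¹ rate under weak sparsity: if max_j ∑_m |A_{jm}|^α ≤ s with 0 ≤ α < 1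
(convention 0^α = 0 also for α = 0), |Â − A|_∞ ≤ δ, and each row of Â has ℓ¹ norm at most
that of A, then every row satisfies ∑_m |Â_{jm} − A_{jm}| ≤ 4·s·(2δ)^{1−α}. -/
theorem stmt16 {d : ℕ} (A Ahat : Matrix (Fin d) (Fin d) ℝ) (s α δ : ℝ)
    (hs : 0 < s) (hα0 : 0 ≤ α) (hα1 : α < 1) (hδ : 0 < δ)
    (hsparse : ∀ j, ∑ m, (if A j m = 0 then (0 : ℝ) else |A j m| ^ α) ≤ s)
    (hclose : ∀ j m, |Ahat j m - A j m| ≤ δ)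
    (hl1 : ∀ j, ∑ m, |Ahat j m| ≤ ∑ m, |A j m|) :
    ∀ j, ∑ m, |Ahat j m - A j m| ≤ 4 * s * (2 * δ) ^ (1 - α) :=
  stmt16_general A Ahat s α δ hα0 hα1 hδ hsparse hclose hl1
end
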